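/- Let N ≥ 1, R > 0, Γ ∈ (0,1), Q ∈ (0,∞). Set Θ = ((Γ + Q(1−Γ))/(Γ R)) · ((Γ + Q(1−Γ))/(Q(1−Γ) R))^{(1−Γ)Q/Γ}, k₂ = Θ^{Γ/Q}, k₁ = Θ^Γ, and define on the closed ball cl(B_R) ⊂ ℝ^N the cone w(x) = k₁(R − ‖x‖) and the linear function z(x) = k₂ x₁ (x₁ the first coordinate of x). Then: (i) w and z are Lipschitz on cl(B_R) with best Lipschitz constants Lip(w) = k₁ and Lip(z) = k₂; (ii) w vanishes on the sphere {‖x‖ = R}; (iii) max_{cl(B_R)} |w|^Γ |z|^{(1−Γ)Q} = 1; (iv) max_{cl(B_R)} |w|^Γ (z⁺)^{(1−Γ)Q} = max_{cl(B_R)} |w|^Γ (z⁻)^{(1−Γ)Q}; and (v) max{Lip(w), Lip(z)^Q} = Θ^Γ = ((Γ + Q(1−Γ))/(Γ R))^Γ · ((Γ + Q(1−Γ))/(Q(1−Γ) R))^{(1−Γ)Q}. In particular the pair (w,z) belongs to A_∞(B_R) and Λ_∞(Γ,Q;B_R) ≤ Θ^Γ. -/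

import Mathlib

/-!
With `b = (1 - Γ) Q` and `s = |x₁| ≤ ‖x‖`, the product `|w|^Γ |z|^b` is at most
`(k₁ (R - s))^Γ (k₂ s)^b`. The choice of `Θ` makes `k₁^Γ k₂^b = A^Γ B^b` with
`A = (Γ + b)/(Γ R)` and `B = (Γ + b)/(b R)`, and since `Γ · A(R - s) + b · B s = Γ + b`,
weighted AM–GM bounds the product by `1`, with equality at `x = ±(R b/(Γ + b)) e₁`.
These two points balance the positive and negative parts of `z`, and the Lipschitz
constants are attained between the centre and the boundary point `R e₁`.
-/

open Real Set Filter

noncomputable section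

/-- The best Lipschitz constant of `f` on the set `S`. -/
def bestLip {N : ℕ} (f : EuclideanSpace ℝ (Fin N) → ℝ)
    (S : Set (EuclideanSpace ℝ (Fin N))) : ℝ :=
  sInf {K : ℝ | 0 ≤ K ∧ ∀ x ∈ S, ∀ y ∈ S, |f x - f y| ≤ K * dist x y}

/-- `f` is Lipschitz on the set `S`. -/
def IsLipschitzOnSet {N : ℕ} (f : EuclideanSpace ℝ (Fin N) → ℝ)
    (S : Set (EuclideanSpace ℝ (Fin N))) : Prop :=
  ∃ K : NNReal, LipschitzOnWith K f S

/-- The admissible class `A_∞(Ω)`: pairs `(w,z)` of Lipschitz functions on `cl Ω`,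
with `w = 0` on `∂Ω`, `w·z` not identically zero on `cl Ω`, and
`max_{cl Ω} |w|^Γ (z⁺)^{(1-Γ)Q} = max_{cl Ω} |w|^Γ (z⁻)^{(1-Γ)Q}`. -/
def AdmClass {N : ℕ} (Γ Q : ℝ) (Ω : Set (EuclideanSpace ℝ (Fin N))) :
    Set ((EuclideanSpace ℝ (Fin N) → ℝ) × (EuclideanSpace ℝ (Fin N) → ℝ)) :=
  {wz | IsLipschitzOnSet wz.1 (closure Ω) ∧ IsLipschitzOnSet wz.2 (closure Ω) ∧
    (∀ x ∈ frontier Ω, wz.1 x = 0) ∧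
    (∃ x ∈ closure Ω, wz.1 x * wz.2 x ≠ 0) ∧
    sSup ((fun x => |wz.1 x| ^ Γ * (max (wz.2 x) 0) ^ ((1 - Γ) * Q)) '' closure Ω) =
      sSup ((fun x => |wz.1 x| ^ Γ * (max (-wz.2 x) 0) ^ ((1 - Γ) * Q)) '' closure Ω)}

/-- The limit eigenvalue `Λ_∞(Γ,Q;Ω)`. -/
def LambdaInfty {N : ℕ} (Γ Q : ℝ) (Ω : Set (EuclideanSpace ℝ (Fin N))) : ℝ :=
  sInf ((fun wz => max (bestLip wz.1 (closure Ω)) (bestLip wz.2 (closure Ω) ^ Q) /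
    sSup ((fun x => |wz.1 x| ^ Γ * |wz.2 x| ^ ((1 - Γ) * Q)) '' closure Ω)) ''
      AdmClass Γ Q Ω)

section Lipschitz

variable {N : ℕ} {f : EuclideanSpace ℝ (Fin N) → ℝ} {S : Set (EuclideanSpace ℝ (Fin N))} {K : ℝ}

theorem bestLip_nonneg : 0 ≤ bestLip f S :=
  Real.sInf_nonneg fun _ hK => hK.1

theorem isLipschitzOnSet_of_forall_le (hK : 0 ≤ K)
    (hle : ∀ x ∈ S, ∀ y ∈ S, |f x - f y| ≤ K * dist x y) : IsLipschitzOnSet f S :=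
  ⟨⟨K, hK⟩, LipschitzOnWith.of_dist_le_mul fun x hx y hy => by
    rw [Real.dist_eq]; exact hle x hx y hy⟩

theorem bestLip_eq_of_forall_le_of_eq (hK : 0 ≤ K)
    (hle : ∀ x ∈ S, ∀ y ∈ S, |f x - f y| ≤ K * dist x y) {x₀ y₀ : EuclideanSpace ℝ (Fin N)}
    (hx₀ : x₀ ∈ S) (hy₀ : y₀ ∈ S) (hne : x₀ ≠ y₀) (heq : |f x₀ - f y₀| = K * dist x₀ y₀) :
    bestLip f S = K := by
  refine le_antisymm (csInf_le ⟨0, fun _ hK' => hK'.1⟩ ⟨hK, hle⟩) ?_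
  refine le_csInf ⟨K, hK, hle⟩ fun K' ⟨_, hK'⟩ => ?_
  have := heq ▸ hK' x₀ hx₀ y₀ hy₀
  exact le_of_mul_le_mul_right this (dist_pos.2 hne)

end Lipschitz

theorem LambdaInfty_le_of_mem {N : ℕ} {Γ Q : ℝ} {Ω : Set (EuclideanSpace ℝ (Fin N))}
    {wz : (EuclideanSpace ℝ (Fin N) → ℝ) × (EuclideanSpace ℝ (Fin N) → ℝ)}
    (h : wz ∈ AdmClass Γ Q Ω) :
    LambdaInfty Γ Q Ω ≤ max (bestLip wz.1 (closure Ω)) (bestLip wz.2 (closure Ω) ^ Q) /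
      sSup ((fun x => |wz.1 x| ^ Γ * |wz.2 x| ^ ((1 - Γ) * Q)) '' closure Ω) := by
  refine csInf_le ⟨0, ?_⟩ ⟨wz, h, rfl⟩
  rintro _ ⟨wz', -, rfl⟩
  exact div_nonneg (le_max_of_le_left bestLip_nonneg)
    (Real.sSup_nonneg (by rintro _ ⟨x, -, rfl⟩; positivity))

theorem Real.rpow_mul_rpow_le_one {p q X Y : ℝ} (hp : 0 < p) (hq : 0 < q) (hX : 0 ≤ X)
    (hY : 0 ≤ Y) (h : p * X + q * Y ≤ p + q) : X ^ p * Y ^ q ≤ 1 := by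
  have hpq : 0 < p + q := add_pos hp hq
  have hmean := Real.geom_mean_le_arith_mean2_weighted (div_nonneg hp.le hpq.le)
    (div_nonneg hq.le hpq.le) hX hY (by rw [← add_div, div_self hpq.ne'])
  have hmean_le : p / (p + q) * X + q / (p + q) * Y ≤ 1 := by
    rw [div_mul_eq_mul_div, div_mul_eq_mul_div, ← add_div, div_le_one hpq]; exact h
  have := Real.rpow_le_one (by positivity) (hmean.trans hmean_le) hpq.le
  rwa [Real.mul_rpow (by positivity) (by positivity), ← Real.rpow_mul hX, ← Real.rpow_mul hY,
    div_mul_cancel₀ _ hpq.ne', div_mul_cancel₀ _ hpq.ne'] at this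

theorem mul_rpow_mul_mul_rpow_eq {p q a₁ a₂ c₁ c₂ u v : ℝ} (ha₁ : 0 ≤ a₁) (ha₂ : 0 ≤ a₂)
    (hc₁ : 0 ≤ c₁) (hc₂ : 0 ≤ c₂) (hu : 0 ≤ u) (hv : 0 ≤ v)
    (h : a₁ ^ p * a₂ ^ q = c₁ ^ p * c₂ ^ q) :
    (a₁ * u) ^ p * (a₂ * v) ^ q = (c₁ * u) ^ p * (c₂ * v) ^ q := by
  rw [Real.mul_rpow ha₁ hu, Real.mul_rpow ha₂ hv, Real.mul_rpow hc₁ hu, Real.mul_rpow hc₂ hv]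
  linear_combination (u ^ p * v ^ q) * h

/-- The extremal pair along the `x₁`-axis; the maximum `1` is attained at `s = R b / (Γ + b)`,
where both factors equal `1`. -/
theorem cone_profile_le_one {Γ b R s : ℝ} (hΓ : 0 < Γ) (hb : 0 < b) (hR : 0 < R) (hs : 0 ≤ s)
    (hsR : s ≤ R) : ((Γ + b) / (Γ * R) * (R - s)) ^ Γ * ((Γ + b) / (b * R) * s) ^ b ≤ 1 := by
  have hRs : 0 ≤ R - s := sub_nonneg.2 hsR
  refine Real.rpow_mul_rpow_le_one hΓ hb (by positivity) (by positivity) (le_of_eq ?_)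
  field_simp
  ring

section ConeCoord

open Metric

variable {N : ℕ} {Γ b R k k₁ k₂ : ℝ}

theorem abs_cone_sub_le {E : Type*} [SeminormedAddCommGroup E] (hk : 0 ≤ k) (x y : E) :
    |k * (R - ‖x‖) - k * (R - ‖y‖)| ≤ k * dist x y := by
  rw [show k * (R - ‖x‖) - k * (R - ‖y‖) = k * (‖y‖ - ‖x‖) by ring, abs_mul, abs_of_nonneg hk,
    dist_comm, dist_eq_norm]
  exact mul_le_mul_of_nonneg_left (abs_norm_sub_norm_le y x) hk

theorem abs_coord_sub_le (i : Fin N) (hk : 0 ≤ k) (x y : EuclideanSpace ℝ (Fin N)) :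
    |k * x i - k * y i| ≤ k * dist x y := by
  rw [← mul_sub, abs_mul, abs_of_nonneg hk, ← Real.dist_eq]
  exact mul_le_mul_of_nonneg_left (PiLp.dist_apply_le x y i) hk

theorem bestLip_cone [NeZero N] (hR : 0 < R) (hk : 0 ≤ k) :
    bestLip (fun x : EuclideanSpace ℝ (Fin N) => k * (R - ‖x‖)) (closedBall 0 R) = k := by
  refine bestLip_eq_of_forall_le_of_eq hk (fun x _ y _ => abs_cone_sub_le hk x y)
    (x₀ := EuclideanSpace.single 0 R) (y₀ := 0) (by simp [abs_of_pos hR]) (by simp [hR.le])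
    (by simp [hR.ne']) ?_
  simp [abs_of_pos hR, abs_of_nonneg hk]

theorem bestLip_coord (i : Fin N) (hR : 0 < R) (hk : 0 ≤ k) :
    bestLip (fun x : EuclideanSpace ℝ (Fin N) => k * x i) (closedBall 0 R) = k := by
  refine bestLip_eq_of_forall_le_of_eq hk (fun x _ y _ => abs_coord_sub_le i hk x y)
    (x₀ := EuclideanSpace.single i R) (y₀ := 0) (by simp [abs_of_pos hR]) (by simp [hR.le])
    (by simp [hR.ne']) ?_
  simp [abs_of_pos hR, abs_of_nonneg hk]

theorem cone_mul_coord_le_one (i : Fin N) (hΓ : 0 < Γ) (hb : 0 < b) (hR : 0 < R) (hk₁ : 0 ≤ k₁)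
    (hk₂ : 0 ≤ k₂) (hk : k₁ ^ Γ * k₂ ^ b = ((Γ + b) / (Γ * R)) ^ Γ * ((Γ + b) / (b * R)) ^ b)
    {x : EuclideanSpace ℝ (Fin N)} (hx : x ∈ closedBall 0 R) :
    |k₁ * (R - ‖x‖)| ^ Γ * |k₂ * x i| ^ b ≤ 1 := by
  rw [mem_closedBall_zero_iff] at hx
  have hxi : |x i| ≤ ‖x‖ := PiLp.norm_apply_le x i
  rw [abs_of_nonneg (mul_nonneg hk₁ (sub_nonneg.2 hx)), abs_mul, abs_of_nonneg hk₂]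
  calc (k₁ * (R - ‖x‖)) ^ Γ * (k₂ * |x i|) ^ b
      ≤ (k₁ * (R - |x i|)) ^ Γ * (k₂ * |x i|) ^ b := by gcongr
    _ = ((Γ + b) / (Γ * R) * (R - |x i|)) ^ Γ * ((Γ + b) / (b * R) * |x i|) ^ b :=
        mul_rpow_mul_mul_rpow_eq hk₁ hk₂ (by positivity) (by positivity) (by linarith)
          (abs_nonneg _) hk
    _ ≤ 1 := cone_profile_le_one hΓ hb hR (abs_nonneg _) (hxi.trans hx)

theorem cone_mul_coord_single_eq_one (i : Fin N) (hΓ : 0 < Γ) (hb : 0 < b) (hR : 0 < R)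
    (hk₁ : 0 ≤ k₁) (hk₂ : 0 ≤ k₂)
    (hk : k₁ ^ Γ * k₂ ^ b = ((Γ + b) / (Γ * R)) ^ Γ * ((Γ + b) / (b * R)) ^ b)
    {s : ℝ} (hs : |s| = R * b / (Γ + b)) :
    |k₁ * (R - ‖EuclideanSpace.single i s‖)| ^ Γ * |k₂ * EuclideanSpace.single i s i| ^ b = 1 := by
  have hsR : |s| ≤ R := by
    rw [hs, div_le_iff₀ (by positivity)]; nlinarith
  simp only [PiLp.norm_single, Real.norm_eq_abs, PiLp.single_eq_same]
  rw [abs_of_nonneg (mul_nonneg hk₁ (sub_nonneg.2 hsR)), abs_mul, abs_of_nonneg hk₂,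
    mul_rpow_mul_mul_rpow_eq hk₁ hk₂ (by positivity) (by positivity) (by linarith)
      (abs_nonneg _) hk, hs]
  have h₁ : (Γ + b) / (Γ * R) * (R - R * b / (Γ + b)) = 1 := by field_simp; ring
  have h₂ : (Γ + b) / (b * R) * (R * b / (Γ + b)) = 1 := by field_simp
  rw [h₁, h₂, Real.one_rpow, Real.one_rpow, one_mul]

/-- `φ` stands for `|·|`, `(·)⁺` or `(·)⁻`. -/
theorem sSup_cone_mul_coord (i : Fin N) (hΓ : 0 < Γ) (hb : 0 < b) (hR : 0 < R)
    (hk₁ : 0 ≤ k₁) (hk₂ : 0 ≤ k₂)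
    (hk : k₁ ^ Γ * k₂ ^ b = ((Γ + b) / (Γ * R)) ^ Γ * ((Γ + b) / (b * R)) ^ b)
    {φ : ℝ → ℝ} (hφ : ∀ s, 0 ≤ φ s ∧ φ s ≤ |s|) {s₀ : ℝ} (hs₀ : |s₀| = R * b / (Γ + b))
    (hφs₀ : φ (k₂ * s₀) = |k₂ * s₀|) :
    sSup ((fun x => |k₁ * (R - ‖x‖)| ^ Γ * φ (k₂ * x i) ^ b) ''
      closedBall (0 : EuclideanSpace ℝ (Fin N)) R) = 1 := by
  refine IsGreatest.csSup_eq ⟨⟨EuclideanSpace.single i s₀, ?_, ?_⟩, ?_⟩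
  · rw [mem_closedBall_zero_iff, PiLp.norm_single, Real.norm_eq_abs, hs₀,
      div_le_iff₀ (by positivity)]
    nlinarith
  · simpa only [PiLp.single_eq_same, hφs₀]
      using cone_mul_coord_single_eq_one i hΓ hb hR hk₁ hk₂ hk hs₀
  · rintro _ ⟨x, hx, rfl⟩
    refine le_trans ?_ (cone_mul_coord_le_one i hΓ hb hR hk₁ hk₂ hk hx)
    exact mul_le_mul_of_nonneg_left (Real.rpow_le_rpow (hφ _).1 (hφ _).2 hb.le) (by positivity)

theorem cone_coord_mem_admClass {Q : ℝ} (i : Fin N) (hΓ : 0 < Γ) (hb : 0 < (1 - Γ) * Q)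
    (hR : 0 < R) (hk₁ : 0 < k₁) (hk₂ : 0 < k₂)
    (hk : k₁ ^ Γ * k₂ ^ ((1 - Γ) * Q) = ((Γ + (1 - Γ) * Q) / (Γ * R)) ^ Γ *
      ((Γ + (1 - Γ) * Q) / ((1 - Γ) * Q * R)) ^ ((1 - Γ) * Q)) :
    (fun x : EuclideanSpace ℝ (Fin N) => k₁ * (R - ‖x‖), fun x => k₂ * x i) ∈
      AdmClass Γ Q (ball 0 R) := by
  set t := R * ((1 - Γ) * Q) / (Γ + (1 - Γ) * Q)
  have ht : 0 < t := by positivity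
  have htR : t < R := by rw [div_lt_iff₀ (by positivity)]; nlinarith
  have hsup {φ : ℝ → ℝ} (hφ : ∀ s, 0 ≤ φ s ∧ φ s ≤ |s|) {s₀ : ℝ} (hs₀ : |s₀| = t)
      (hφs₀ : φ (k₂ * s₀) = |k₂ * s₀|) :=
    sSup_cone_mul_coord i hΓ hb hR hk₁.le hk₂.le hk hφ hs₀ hφs₀
  rw [AdmClass, Set.mem_ofPred_eq, closure_ball 0 hR.ne', frontier_ball 0 hR.ne']
  refine ⟨isLipschitzOnSet_of_forall_le hk₁.le fun x _ y _ => abs_cone_sub_le hk₁.le x y,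
    isLipschitzOnSet_of_forall_le hk₂.le fun x _ y _ => abs_coord_sub_le i hk₂.le x y,
    fun x hx => by simp [mem_sphere_zero_iff_norm.1 hx],
    ⟨EuclideanSpace.single i t, by simp [abs_of_pos ht, htR.le], ?_⟩, ?_⟩
  · simpa [abs_of_pos ht] using
      mul_ne_zero (mul_pos hk₁ (sub_pos.2 htR)).ne' (mul_pos hk₂ ht).ne'
  · have hkt : 0 ≤ k₂ * t := by positivity
    rw [hsup (fun s => ⟨le_max_right _ _, max_le (le_abs_self s) (abs_nonneg s)⟩)
        (abs_of_pos ht) (by rw [max_eq_left hkt, abs_of_nonneg hkt]),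
      hsup (fun s => ⟨le_max_right _ _, max_le (neg_le_abs s) (abs_nonneg s)⟩)
        (s₀ := -t) (by rw [abs_neg, abs_of_pos ht])
        (by rw [mul_neg, neg_neg, abs_neg, max_eq_left hkt, abs_of_nonneg hkt])]

end ConeCoord

/-- The explicit extremal pair on the ball: the cone `w(x) = k₁(R - ‖x‖)` and the linear
function `z(x) = k₂ x₁` are admissible and realize the value
`((Γ+Q(1-Γ))/(ΓR))^Γ ((Γ+Q(1-Γ))/(Q(1-Γ)R))^{(1-Γ)Q}`, so that
`Λ_∞(Γ,Q;B_R) ≤ Θ^Γ`. -/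
theorem extremal_pair_ball (N : ℕ) (hN : 1 ≤ N) (R Γ Q : ℝ) (hR : 0 < R)
    (hΓ : Γ ∈ Set.Ioo (0 : ℝ) 1) (hQ : 0 < Q)
    (Θ k₁ k₂ : ℝ)
    (hΘ : Θ = ((Γ + Q * (1 - Γ)) / (Γ * R)) *
      ((Γ + Q * (1 - Γ)) / (Q * (1 - Γ) * R)) ^ ((1 - Γ) * Q / Γ))
    (hk₂ : k₂ = Θ ^ (Γ / Q)) (hk₁ : k₁ = Θ ^ Γ)
    (w z : EuclideanSpace ℝ (Fin N) → ℝ)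
    (hw : w = fun x => k₁ * (R - ‖x‖))
    (hz : z = fun x => k₂ * x ⟨0, hN⟩) :
    -- (i) `w` and `z` are Lipschitz on `cl(B_R)` with best Lipschitz constants `k₁`, `k₂`
    IsLipschitzOnSet w (closure (Metric.ball (0 : EuclideanSpace ℝ (Fin N)) R)) ∧
    IsLipschitzOnSet z (closure (Metric.ball (0 : EuclideanSpace ℝ (Fin N)) R)) ∧
    bestLip w (closure (Metric.ball (0 : EuclideanSpace ℝ (Fin N)) R)) = k₁ ∧
    bestLip z (closure (Metric.ball (0 : EuclideanSpace ℝ (Fin N)) R)) = k₂ ∧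
    -- (ii) `w` vanishes on the sphere `{‖x‖ = R}`
    (∀ x : EuclideanSpace ℝ (Fin N), ‖x‖ = R → w x = 0) ∧
    -- (iii) `max_{cl(B_R)} |w|^Γ |z|^{(1-Γ)Q} = 1`
    sSup ((fun x => |w x| ^ Γ * |z x| ^ ((1 - Γ) * Q)) ''
      closure (Metric.ball (0 : EuclideanSpace ℝ (Fin N)) R)) = 1 ∧
    -- (iv) the positive and negative parts balance
    sSup ((fun x => |w x| ^ Γ * (max (z x) 0) ^ ((1 - Γ) * Q)) ''
      closure (Metric.ball (0 : EuclideanSpace ℝ (Fin N)) R)) =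
      sSup ((fun x => |w x| ^ Γ * (max (-z x) 0) ^ ((1 - Γ) * Q)) ''
        closure (Metric.ball (0 : EuclideanSpace ℝ (Fin N)) R)) ∧
    -- (v) `max{Lip(w), Lip(z)^Q} = Θ^Γ` equals the explicit value
    max k₁ (k₂ ^ Q) = Θ ^ Γ ∧
    Θ ^ Γ = ((Γ + Q * (1 - Γ)) / (Γ * R)) ^ Γ *
      ((Γ + Q * (1 - Γ)) / (Q * (1 - Γ) * R)) ^ ((1 - Γ) * Q) ∧
    -- in particular `(w,z) ∈ A_∞(B_R)` and `Λ_∞(Γ,Q;B_R) ≤ Θ^Γ`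
    (w, z) ∈ AdmClass Γ Q (Metric.ball (0 : EuclideanSpace ℝ (Fin N)) R) ∧
    LambdaInfty Γ Q (Metric.ball (0 : EuclideanSpace ℝ (Fin N)) R) ≤ Θ ^ Γ := by
  obtain ⟨hΓ0, hΓ1⟩ := hΓ
  have : NeZero N := ⟨by omega⟩
  have hb : 0 < (1 - Γ) * Q := mul_pos (by linarith) hQ
  rw [mul_comm Q (1 - Γ)] at hΘ ⊢
  have hΘ0 : 0 < Θ := by rw [hΘ]; positivity
  have hk₁0 : 0 < k₁ := hk₁ ▸ Real.rpow_pos_of_pos hΘ0 Γ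
  have hk₂0 : 0 < k₂ := hk₂ ▸ Real.rpow_pos_of_pos hΘ0 _
  have hk₂Q : k₂ ^ Q = k₁ := by rw [hk₂, hk₁, ← Real.rpow_mul hΘ0.le, div_mul_cancel₀ _ hQ.ne']
  have hΘΓ : Θ ^ Γ = ((Γ + (1 - Γ) * Q) / (Γ * R)) ^ Γ *
      ((Γ + (1 - Γ) * Q) / ((1 - Γ) * Q * R)) ^ ((1 - Γ) * Q) := by
    rw [hΘ, Real.mul_rpow (by positivity) (by positivity), ← Real.rpow_mul (by positivity),
      div_mul_cancel₀ _ hΓ0.ne']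
  have hk : k₁ ^ Γ * k₂ ^ ((1 - Γ) * Q) = Θ ^ Γ := by
    rw [mul_comm (1 - Γ), Real.rpow_mul hk₂0.le, hk₂Q, ← Real.rpow_add hk₁0, add_sub_cancel,
      Real.rpow_one, hk₁]
  subst hw hz
  have hadm := cone_coord_mem_admClass ⟨0, hN⟩ hΓ0 hb hR hk₁0 hk₂0 (hk.trans hΘΓ)
  have hcl := closure_ball (0 : EuclideanSpace ℝ (Fin N)) hR.ne'
  have hLip₁ : bestLip (fun x => k₁ * (R - ‖x‖)) (closure (Metric.ball 0 R)) = k₁ :=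
    hcl ▸ bestLip_cone hR hk₁0.le
  have hLip₂ : bestLip (fun x => k₂ * x ⟨0, hN⟩) (closure (Metric.ball 0 R)) = k₂ :=
    hcl ▸ bestLip_coord _ hR hk₂0.le
  have hsup : sSup ((fun x : EuclideanSpace ℝ (Fin N) =>
      |k₁ * (R - ‖x‖)| ^ Γ * |k₂ * x ⟨0, hN⟩| ^ ((1 - Γ) * Q)) '' closure (Metric.ball 0 R)) = 1 :=
    hcl ▸ sSup_cone_mul_coord _ hΓ0 hb hR hk₁0.le hk₂0.le (hk.trans hΘΓ) (φ := abs)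
      (fun s => ⟨abs_nonneg s, le_rfl⟩) (abs_of_pos (by positivity)) rfl
  have hmax : max k₁ (k₂ ^ Q) = Θ ^ Γ := by rw [hk₂Q, max_self, hk₁]
  refine ⟨hadm.1, hadm.2.1, hLip₁, hLip₂, fun x hx => by simp [hx], hsup, hadm.2.2.2.2, hmax,
    hΘΓ, hadm, (LambdaInfty_le_of_mem hadm).trans_eq ?_⟩
  rw [hLip₁, hLip₂, hsup, div_one, hmax]
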